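/- arXiv:1312.7710 — 4 statements merged into one kernel-verified Lean document; each statement's English description precedes it below -/
import Mathlib

section
/- Let $(a_k)$, $(b_k)$, $(c_k)$ be sequences of nonnegative real numbers such that $\sum_k c_k < \infty$ and $a_{k+1} \le a_k - b_k + c_k$ for all $k$. Then the sequence $(a_k)$ converges and $\sum_k b_k < \infty$. -/
theorem stmt0 (a b c : ℕ → ℝ) (ha : ∀ k, 0 ≤ a k) (hb : ∀ k, 0 ≤ b k)
    (hc : ∀ k, 0 ≤ c k) (hcsum : Summable c)
    (hrec : ∀ k, a (k + 1) ≤ a k - b k + c k) :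
    (∃ l : ℝ, Filter.Tendsto a Filter.atTop (nhds l)) ∧ Summable b := by
  -- tail sums of c
  set t : ℕ → ℝ := fun n => ∑' k, c (k + n) with ht
  have hsumtail : ∀ n, Summable fun k => c (k + n) := fun n =>
    hcsum.comp_injective (add_left_injective n)
  have ht0 : Filter.Tendsto t Filter.atTop (nhds 0) := tendsto_sum_nat_add c
  have htnn : ∀ n, 0 ≤ t n := fun n => tsum_nonneg fun k => hc _
  -- d n = a n + t n is antitone
  set d : ℕ → ℝ := fun n => a n + t n with hd
  have hstep : ∀ n, t n = c n + t (n + 1) := by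
    intro n
    have := Summable.tsum_eq_zero_add (hsumtail n)
    simp only [zero_add] at this
    rw [ht]
    simp only [this]
    congr 1
    apply tsum_congr; intro k; congr 1; omega
  have hanti : Antitone d := antitone_nat_of_succ_le fun n => by
    have h1 := hrec n
    have h2 := hstep n
    have h3 := hb n
    simp only [hd]
    nlinarith
  have hbdd : BddBelow (Set.range d) := ⟨0, fun x ⟨n, hn⟩ => hn ▸ add_nonneg (ha n) (htnn n)⟩
  have hdconv : Filter.Tendsto d Filter.atTop (nhds (⨅ n, d n)) :=
    tendsto_atTop_ciInf hanti hbdd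
  constructor
  · refine ⟨(⨅ n, d n) - 0, ?_⟩
    have : a = fun n => d n - t n := by funext n; simp [hd]
    rw [this]
    exact hdconv.sub ht0
  · -- partial sums of b bounded
    apply summable_of_sum_range_le hb (c := a 0 + t 0)
    intro n
    have key : ∀ n, ∑ i ∈ Finset.range n, b i ≤ a 0 + t 0 - a n - t n := by
      intro n
      induction n with
      | zero => simp
      | succ m ih =>
        rw [Finset.sum_range_succ]
        have h1 := hrec m
        have h2 := hstep m
        linarith
    have := key n
    have := ha n
    have := htnn n
    linarith
end

section
/- Let $h$ be the Huber function with parameters $\tau, \omega > 0$, and let $\lambda > 0$, $d \ge 0$. The minimizer over $t \in [0, d]$ of $t \mapsto \tfrac{1}{2} t^2 + \lambda h(d - t)$ is given by $t = \frac{2\lambda\tau^2}{1 + 2\lambda\tau^2} d$ if $d < \frac{\omega(1 + 2\lambda\tau^2)}{\sqrt{2}\tau}$, and $t = \min(d, \sqrt{2}\lambda\omega\tau)$ otherwise. -/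
/-- The Huber function with parameters `τ, ω > 0`. -/
noncomputable def huber (τ ω : ℝ) (s : ℝ) : ℝ :=
  if s < ω / (Real.sqrt 2 * τ) then τ ^ 2 * s ^ 2
  else ω * Real.sqrt 2 * τ * s - ω ^ 2 / 2

lemma huber_ge_tangent (τ ω s₀ s : ℝ) (hτ : 0 < τ) (hω : 0 < ω) (h0 : 0 ≤ s₀)
    (hlt : s₀ < ω / (Real.sqrt 2 * τ)) :
    2 * τ ^ 2 * s₀ * s - τ ^ 2 * s₀ ^ 2 ≤ huber τ ω s := by
  have hr : Real.sqrt 2 ^ 2 = 2 := Real.sq_sqrt (by norm_num)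
  have hr0 : (0:ℝ) < Real.sqrt 2 := Real.sqrt_pos.mpr (by norm_num)
  rw [lt_div_iff₀ (by positivity)] at hlt
  unfold huber
  split_ifs with h
  · nlinarith [sq_nonneg (s - s₀)]
  · push_neg at h
    rw [div_le_iff₀ (by positivity)] at h
    have ha : 0 ≤ ω - Real.sqrt 2 * τ * s₀ := by nlinarith
    have hb : 0 ≤ Real.sqrt 2 * τ * s - ω := by nlinarith
    have key : ω * Real.sqrt 2 * τ * s - ω ^ 2 / 2 - (2 * τ ^ 2 * s₀ * s - τ ^ 2 * s₀ ^ 2)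
        = (ω - Real.sqrt 2 * τ * s₀) * (Real.sqrt 2 * τ * s - ω)
          + (ω - Real.sqrt 2 * τ * s₀) ^ 2 / 2 := by
      linear_combination (τ ^ 2 * s₀ * s - τ ^ 2 * s₀ ^ 2 / 2) * hr
    nlinarith [mul_nonneg ha hb, sq_nonneg (ω - Real.sqrt 2 * τ * s₀), key]

lemma huber_ge_linear (τ ω s : ℝ) (hτ : 0 < τ) (hω : 0 < ω) :
    ω * Real.sqrt 2 * τ * s - ω ^ 2 / 2 ≤ huber τ ω s := by
  have hr : Real.sqrt 2 ^ 2 = 2 := Real.sq_sqrt (by norm_num)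
  have hr0 : (0:ℝ) < Real.sqrt 2 := Real.sqrt_pos.mpr (by norm_num)
  unfold huber
  split_ifs with h
  · have key : τ ^ 2 * s ^ 2 - (ω * Real.sqrt 2 * τ * s - ω ^ 2 / 2)
        = (τ * s - ω * Real.sqrt 2 / 2) ^ 2 + ω ^ 2 / 2 - ω ^ 2 * Real.sqrt 2 ^ 2 / 4 := by
      ring
    nlinarith [sq_nonneg (τ * s - ω * Real.sqrt 2 / 2), key]
  · exact le_refl _

theorem stmt6 (τ ω lam d : ℝ) (hτ : 0 < τ) (hω : 0 < ω) (hlam : 0 < lam) (hd : 0 ≤ d) :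
    (if d < ω * (1 + 2 * lam * τ ^ 2) / (Real.sqrt 2 * τ) then
        2 * lam * τ ^ 2 / (1 + 2 * lam * τ ^ 2) * d
      else min d (Real.sqrt 2 * lam * ω * τ)) ∈ Set.Icc (0 : ℝ) d ∧
    IsMinOn (fun t : ℝ => 1 / 2 * t ^ 2 + lam * huber τ ω (d - t)) (Set.Icc 0 d)
      (if d < ω * (1 + 2 * lam * τ ^ 2) / (Real.sqrt 2 * τ) then
        2 * lam * τ ^ 2 / (1 + 2 * lam * τ ^ 2) * d
      else min d (Real.sqrt 2 * lam * ω * τ)) := by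
  have hr : Real.sqrt 2 ^ 2 = 2 := Real.sq_sqrt (by norm_num)
  have hr0 : (0:ℝ) < Real.sqrt 2 := Real.sqrt_pos.mpr (by norm_num)
  have hA : (0:ℝ) < 1 + 2 * lam * τ ^ 2 := by positivity
  split_ifs with hcase
  · -- quadratic case
    set s₀ : ℝ := d / (1 + 2 * lam * τ ^ 2) with hs₀
    have hteq : 2 * lam * τ ^ 2 / (1 + 2 * lam * τ ^ 2) * d = 2 * lam * τ ^ 2 * s₀ := by
      rw [hs₀]; ring
    have hdeq : d = (1 + 2 * lam * τ ^ 2) * s₀ := by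
      rw [hs₀]; field_simp
    have hs₀0 : 0 ≤ s₀ := by positivity
    have hs₀lt : s₀ < ω / (Real.sqrt 2 * τ) := by
      rw [hs₀, div_lt_div_iff₀ hA (by positivity)]
      rw [lt_div_iff₀ (by positivity)] at hcase
      linarith
    constructor
    · constructor
      · rw [hteq]; positivity
      · rw [hteq]; nlinarith [hdeq, hs₀0]
    · rw [isMinOn_iff]
      intro x hx
      rw [hteq]
      have hdh : d - 2 * lam * τ ^ 2 * s₀ = s₀ := by rw [hdeq]; ring
      have hhub0 : huber τ ω (d - 2 * lam * τ ^ 2 * s₀) = τ ^ 2 * s₀ ^ 2 := by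
        rw [hdh, huber, if_pos hs₀lt]
      have hH := huber_ge_tangent τ ω s₀ (d - x) hτ hω hs₀0 hs₀lt
      rw [hhub0]
      have key : 0 ≤ lam * (huber τ ω (d - x) - (2 * τ ^ 2 * s₀ * (d - x) - τ ^ 2 * s₀ ^ 2)) :=
        mul_nonneg hlam.le (by linarith)
      rw [hdeq] at key ⊢
      nlinarith [key, sq_nonneg (x - 2 * lam * τ ^ 2 * s₀)]
  · -- linear case
    push_neg at hcase
    rw [div_le_iff₀ (by positivity)] at hcase
    have hkey : ω ≤ (d - Real.sqrt 2 * lam * ω * τ) * (Real.sqrt 2 * τ) := by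
      have e : (d - Real.sqrt 2 * lam * ω * τ) * (Real.sqrt 2 * τ)
          = d * (Real.sqrt 2 * τ) - 2 * lam * ω * τ ^ 2 := by
        linear_combination (-(lam * ω * τ ^ 2)) * hr
      rw [e]; nlinarith [hcase]
    have htd : Real.sqrt 2 * lam * ω * τ ≤ d := by
      nlinarith [hkey, mul_pos hr0 hτ, hω]
    have hmin : min d (Real.sqrt 2 * lam * ω * τ) = Real.sqrt 2 * lam * ω * τ :=
      min_eq_right htd
    rw [hmin]
    have ht0 : (0:ℝ) ≤ Real.sqrt 2 * lam * ω * τ := by positivity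
    refine ⟨⟨ht0, htd⟩, ?_⟩
    rw [isMinOn_iff]
    intro x hx
    have hsge : ω / (Real.sqrt 2 * τ) ≤ d - Real.sqrt 2 * lam * ω * τ := by
      rw [div_le_iff₀ (by positivity)]
      exact hkey
    have hhub0 : huber τ ω (d - Real.sqrt 2 * lam * ω * τ) =
        ω * Real.sqrt 2 * τ * (d - Real.sqrt 2 * lam * ω * τ) - ω ^ 2 / 2 := by
      rw [huber, if_neg (not_lt.mpr hsge)]
    have hH := huber_ge_linear τ ω (d - x) hτ hω
    rw [hhub0]
    have key : 0 ≤ lam * (huber τ ω (d - x) - (ω * Real.sqrt 2 * τ * (d - x) - ω ^ 2 / 2)) :=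
      mul_nonneg hlam.le (by linarith)
    nlinarith [key, sq_nonneg (x - Real.sqrt 2 * lam * ω * τ)]
end

section
/- Let $h$ be the Huber function with parameters $\tau, \omega > 0$, let $\lambda > 0$ and $d \ge 0$. The minimizer over $t \in [0, d/2]$ of $t \mapsto t^2 + \lambda h(d - 2t)$ is $t = \frac{2\lambda\tau^2}{1 + 4\lambda\tau^2} d$ if $d < \frac{\omega(1 + 4\lambda\tau^2)}{\sqrt{2}\tau}$, and $t = \min(d/2, \sqrt{2}\lambda\omega\tau)$ otherwise. -/
theorem myaux (b ω lam d : ℝ) (hb : 0 < b) (hω : 0 < ω) (hlam : 0 < lam) (hd : 0 ≤ d) :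
    (if d < ω * (1 + 2 * lam * b ^ 2) / b then
        lam * b ^ 2 / (1 + 2 * lam * b ^ 2) * d
      else min (d / 2) (lam * ω * b)) ∈ Set.Icc (0 : ℝ) (d / 2) ∧
    IsMinOn (fun t : ℝ => t ^ 2 + lam *
        (if d - 2 * t < ω / b then b ^ 2 / 2 * (d - 2 * t) ^ 2
          else ω * b * (d - 2 * t) - ω ^ 2 / 2)) (Set.Icc 0 (d / 2))
      (if d < ω * (1 + 2 * lam * b ^ 2) / b then
        lam * b ^ 2 / (1 + 2 * lam * b ^ 2) * d
      else min (d / 2) (lam * ω * b)) := by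
  have hApos : (0:ℝ) < 1 + 2 * lam * b ^ 2 := by positivity
  by_cases hcond : d < ω * (1 + 2 * lam * b ^ 2) / b
  · simp only [if_pos hcond]
    have hts0 : 0 ≤ lam * b ^ 2 / (1 + 2 * lam * b ^ 2) * d :=
      mul_nonneg (by positivity) hd
    have hts1 : lam * b ^ 2 / (1 + 2 * lam * b ^ 2) * d ≤ d / 2 := by
      have h1 : lam * b ^ 2 / (1 + 2 * lam * b ^ 2) ≤ 1 / 2 := by
        rw [div_le_div_iff₀ hApos (by norm_num)]
        nlinarith [mul_nonneg hlam.le (sq_nonneg b)]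
      calc lam * b ^ 2 / (1 + 2 * lam * b ^ 2) * d ≤ 1 / 2 * d :=
            mul_le_mul_of_nonneg_right h1 hd
        _ = d / 2 := by ring
    refine ⟨⟨hts0, hts1⟩, ?_⟩
    rw [isMinOn_iff]
    intro t ⟨ht0, ht1⟩
    have hdb : d * b < ω * (1 + 2 * lam * b ^ 2) := (lt_div_iff₀ hb).mp hcond
    have h1 : d - 2 * (lam * b ^ 2 / (1 + 2 * lam * b ^ 2) * d)
        = d / (1 + 2 * lam * b ^ 2) := by field_simp; ring
    have h2 : d / (1 + 2 * lam * b ^ 2) < ω / b := by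
      rw [div_lt_div_iff₀ hApos hb]; linarith
    simp only [h1, if_pos h2]
    split_ifs with hb2
    · -- quadratic branch at t
      have keyq : t ^ 2 + lam * (b ^ 2 / 2 * (d - 2 * t) ^ 2)
          = ((lam * b ^ 2 / (1 + 2 * lam * b ^ 2) * d) ^ 2
              + lam * (b ^ 2 / 2 * (d / (1 + 2 * lam * b ^ 2)) ^ 2))
            + ((1 + 2 * lam * b ^ 2) * t - lam * b ^ 2 * d) ^ 2 / (1 + 2 * lam * b ^ 2) := by
        field_simp
        ring
      rw [keyq]
      have : 0 ≤ ((1 + 2 * lam * b ^ 2) * t - lam * b ^ 2 * d) ^ 2 / (1 + 2 * lam * b ^ 2) := by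
        positivity
      linarith
    · -- linear branch at t
      push_neg at hb2
      have hcb : ω ≤ b * (d - 2 * t) := by
        rw [div_le_iff₀ hb] at hb2; linarith
      have htt1 : t ≤ (d - ω / b) / 2 := by linarith
      have ht1t0 : (d - ω / b) / 2 ≤ lam * ω * b := by
        have : ω * (1 + 2 * lam * b ^ 2) / b = ω / b + 2 * lam * ω * b := by
          field_simp
        rw [this] at hcond
        linarith
      have key : t ^ 2 + lam * (ω * b * (d - 2 * t) - ω ^ 2 / 2)
          = ((lam * b ^ 2 / (1 + 2 * lam * b ^ 2) * d) ^ 2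
              + lam * (b ^ 2 / 2 * (d / (1 + 2 * lam * b ^ 2)) ^ 2))
            + (((d - ω / b) / 2 - t) * (2 * (lam * ω * b) - t - (d - ω / b) / 2)
              + (1 + 2 * lam * b ^ 2)
                * ((d - ω / b) / 2 - lam * b ^ 2 / (1 + 2 * lam * b ^ 2) * d) ^ 2) := by
        field_simp
        ring
      rw [key]
      have hprod : 0 ≤ ((d - ω / b) / 2 - t) * (2 * (lam * ω * b) - t - (d - ω / b) / 2) := by
        apply mul_nonneg <;> linarith
      nlinarith [mul_nonneg hApos.le
        (sq_nonneg ((d - ω / b) / 2 - lam * b ^ 2 / (1 + 2 * lam * b ^ 2) * d))]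
  · simp only [if_neg hcond]
    push_neg at hcond
    have hdb : ω * (1 + 2 * lam * b ^ 2) ≤ d * b := (div_le_iff₀ hb).mp hcond
    have ht0 : lam * ω * b ≤ d / 2 := by nlinarith [mul_pos hω hb]
    have hmin : min (d / 2) (lam * ω * b) = lam * ω * b := min_eq_right ht0
    rw [hmin]
    refine ⟨⟨by positivity, ht0⟩, ?_⟩
    rw [isMinOn_iff]
    intro t ⟨ht0', ht1'⟩
    have hbr : ¬ (d - 2 * (lam * ω * b) < ω / b) := by
      push_neg
      rw [div_le_iff₀ hb]
      nlinarith
    simp only [if_neg hbr]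
    split_ifs with hb2
    · have keyq : t ^ 2 + lam * (b ^ 2 / 2 * (d - 2 * t) ^ 2)
          = ((lam * ω * b) ^ 2 + lam * (ω * b * (d - 2 * (lam * ω * b)) - ω ^ 2 / 2))
            + (lam / 2 * (b * (d - 2 * t) - ω) ^ 2 + (t - lam * ω * b) ^ 2) := by
        ring
      rw [keyq]
      have h3 : 0 ≤ lam / 2 * (b * (d - 2 * t) - ω) ^ 2 := by positivity
      have h4 : 0 ≤ (t - lam * ω * b) ^ 2 := sq_nonneg _
      linarith
    · have keyl : t ^ 2 + lam * (ω * b * (d - 2 * t) - ω ^ 2 / 2)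
          = ((lam * ω * b) ^ 2 + lam * (ω * b * (d - 2 * (lam * ω * b)) - ω ^ 2 / 2))
            + (t - lam * ω * b) ^ 2 := by
        ring
      rw [keyl]
      have h4 : 0 ≤ (t - lam * ω * b) ^ 2 := sq_nonneg _
      linarith

theorem stmt7 (τ ω lam d : ℝ) (hτ : 0 < τ) (hω : 0 < ω) (hlam : 0 < lam) (hd : 0 ≤ d) :
    (if d < ω * (1 + 4 * lam * τ ^ 2) / (Real.sqrt 2 * τ) then
        2 * lam * τ ^ 2 / (1 + 4 * lam * τ ^ 2) * d
      else min (d / 2) (Real.sqrt 2 * lam * ω * τ)) ∈ Set.Icc (0 : ℝ) (d / 2) ∧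
    IsMinOn (fun t : ℝ => t ^ 2 + lam * huber τ ω (d - 2 * t)) (Set.Icc 0 (d / 2))
      (if d < ω * (1 + 4 * lam * τ ^ 2) / (Real.sqrt 2 * τ) then
        2 * lam * τ ^ 2 / (1 + 4 * lam * τ ^ 2) * d
      else min (d / 2) (Real.sqrt 2 * lam * ω * τ)) := by
  have h2 : Real.sqrt 2 ^ 2 = 2 := Real.sq_sqrt (by norm_num)
  have hbpos : 0 < Real.sqrt 2 * τ := mul_pos (Real.sqrt_pos.mpr (by norm_num)) hτ
  obtain ⟨H1, H2⟩ := myaux (Real.sqrt 2 * τ) ω lam d hbpos hω hlam hd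
  have e4 : ∀ t : ℝ, (if d - 2 * t < ω / (Real.sqrt 2 * τ) then
      (Real.sqrt 2 * τ) ^ 2 / 2 * (d - 2 * t) ^ 2
      else ω * (Real.sqrt 2 * τ) * (d - 2 * t) - ω ^ 2 / 2) = huber τ ω (d - 2 * t) := by
    intro t
    unfold huber
    split_ifs with h
    · rw [mul_pow, h2]; ring
    · ring
  have e1 : ω * (1 + 2 * lam * (Real.sqrt 2 * τ) ^ 2) / (Real.sqrt 2 * τ)
      = ω * (1 + 4 * lam * τ ^ 2) / (Real.sqrt 2 * τ) := by
    rw [mul_pow, h2]; ring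
  have e2 : lam * (Real.sqrt 2 * τ) ^ 2 / (1 + 2 * lam * (Real.sqrt 2 * τ) ^ 2) * d
      = 2 * lam * τ ^ 2 / (1 + 4 * lam * τ ^ 2) * d := by
    rw [mul_pow, h2]; ring_nf
  have e3 : lam * ω * (Real.sqrt 2 * τ) = Real.sqrt 2 * lam * ω * τ := by ring
  simp only [e4] at H2
  rw [e1, e2, e3] at H1 H2
  exact ⟨H1, H2⟩
end

section
/- Let $g_1, \ldots, g_n : \mathbb{R}^d \to \mathbb{R}$ be convex functions that are Lipschitz with common constant $L$ on $\mathbb{R}^d$, let $g = g_1 + \cdots + g_n$ have a minimizer $y^*$, and let $(\lambda_k)$ be a positive sequence with $\sum_k \lambda_k = \infty$ and $\sum_k \lambda_k^2 < \infty$. Define the parallel proximal iteration $x^{k+1} = \frac{1}{n}\sum_{i=1}^n \mathrm{prox}_{\lambda_k g_i}(x^k)$. Then $d(x^{k+1}, y)^2 \le d(x^k, y)^2 - \frac{2\lambda_k}{n}(g(x^k) - g(y)) + 4\lambda_k^2 L^2$ holds for every $y \in \mathbb{R}^d$ and every $k$. -/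
open RealInnerProductSpace Filter Topology

lemma prox_key {dim : ℕ} {g : EuclideanSpace ℝ (Fin dim) → ℝ}
    (hconv : ConvexOn ℝ Set.univ g) {lam : ℝ} (hlam : 0 < lam)
    (x q : EuclideanSpace ℝ (Fin dim))
    (hmin : IsMinOn (fun z => lam * g z + 1 / 2 * ‖x - z‖ ^ 2) Set.univ q)
    (y : EuclideanSpace ℝ (Fin dim)) :
    lam * (g q - g y) ≤ ⟪x - q, q - y⟫ := by
  have key : ∀ t : ℝ, 0 < t → t ≤ 1 →
      lam * (g q - g y) ≤ ⟪x - q, q - y⟫ + t / 2 * ‖y - q‖ ^ 2 := by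
    intro t ht ht1
    have hz := hmin (Set.mem_univ (q + t • (y - q)))
    simp only [Set.mem_setOf_eq] at hz
    have hcc : g (q + t • (y - q)) ≤ (1 - t) * g q + t * g y := by
      have := hconv.2 (Set.mem_univ q) (Set.mem_univ y)
        (by linarith : (0:ℝ) ≤ 1 - t) ht.le (by ring)
      have heq : (1 - t) • q + t • y = q + t • (y - q) := by
        module
      rw [heq] at this
      simpa using this
    have hnorm : ‖x - (q + t • (y - q))‖ ^ 2
        = ‖x - q‖ ^ 2 - 2 * (t * ⟪x - q, y - q⟫) + t ^ 2 * ‖y - q‖ ^ 2 := by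
      have heq : x - (q + t • (y - q)) = (x - q) - t • (y - q) := by module
      rw [heq, norm_sub_sq_real, real_inner_smul_right, norm_smul]
      simp [abs_of_pos ht, mul_pow]
    rw [hnorm] at hz
    have hip : ⟪x - q, y - q⟫ = - ⟪x - q, q - y⟫ := by
      rw [← inner_neg_right]; congr 1; module
    rw [hip] at hz
    have : t * (lam * (g q - g y)) ≤ t * (⟪x - q, q - y⟫ + t / 2 * ‖y - q‖ ^ 2) := by
      nlinarith [hz, hcc]
    exact le_of_mul_le_mul_left this ht
  have htend : Tendsto (fun t : ℝ => ⟪x - q, q - y⟫ + t / 2 * ‖y - q‖ ^ 2)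
      (𝓝[>] (0:ℝ)) (𝓝 (⟪x - q, q - y⟫ + 0 / 2 * ‖y - q‖ ^ 2)) := by
    apply Tendsto.mono_left _ nhdsWithin_le_nhds
    exact (continuous_const.add (((continuous_id.div_const 2).mul continuous_const))).tendsto 0
  simp only [zero_div, zero_mul, add_zero] at htend
  refine ge_of_tendsto htend ?_
  filter_upwards [Ioo_mem_nhdsGT_of_mem (by norm_num : (0:ℝ) ∈ Set.Ico 0 1)] with t ht
  exact key t ht.1 ht.2.le

theorem stmt12 {dim n : ℕ} (hn : 0 < n)
    (g : Fin n → EuclideanSpace ℝ (Fin dim) → ℝ) (L : NNReal)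
    (hconv : ∀ i, ConvexOn ℝ Set.univ (g i))
    (hlip : ∀ i, LipschitzWith L (g i))
    (G : EuclideanSpace ℝ (Fin dim) → ℝ) (hG : G = fun z => ∑ i, g i z)
    (ystar : EuclideanSpace ℝ (Fin dim)) (hystar : IsMinOn G Set.univ ystar)
    (lam : ℕ → ℝ) (hlampos : ∀ k, 0 < lam k)
    (hlamdiv : ¬ Summable lam) (hlamsq : Summable (fun k => lam k ^ 2))
    (x : ℕ → EuclideanSpace ℝ (Fin dim))
    (p : ℕ → Fin n → EuclideanSpace ℝ (Fin dim))
    (hprox : ∀ k i, IsMinOn (fun z => lam k * g i z + 1 / 2 * ‖x k - z‖ ^ 2)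
      Set.univ (p k i))
    (hiter : ∀ k, x (k + 1) = (n : ℝ)⁻¹ • ∑ i, p k i) :
    ∀ (y : EuclideanSpace ℝ (Fin dim)) (k : ℕ),
      dist (x (k + 1)) y ^ 2 ≤ dist (x k) y ^ 2
        - 2 * lam k / n * (G (x k) - G y) + 4 * lam k ^ 2 * (L : ℝ) ^ 2 := by
  intro y k
  set lk := lam k with hlk
  have hlkpos := hlampos k
  -- per-i bound
  have hper : ∀ i, ‖p k i - y‖ ^ 2 ≤ ‖x k - y‖ ^ 2
      - 2 * lk * (g i (x k) - g i y) + 4 * lk ^ 2 * (L : ℝ) ^ 2 := by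
    intro i
    have hkey := prox_key (hconv i) hlkpos (x k) (p k i) (hprox k i) y
    have hexp : ‖x k - y‖ ^ 2
        = ‖x k - p k i‖ ^ 2 + 2 * ⟪x k - p k i, p k i - y⟫ + ‖p k i - y‖ ^ 2 := by
      have heq : x k - y = (x k - p k i) + (p k i - y) := by module
      rw [heq, norm_add_sq_real]
    have hlipx : |g i (x k) - g i (p k i)| ≤ (L : ℝ) * ‖x k - p k i‖ := by
      have := (hlip i).dist_le_mul (x k) (p k i)
      rwa [Real.dist_eq, dist_eq_norm] at this
    have habs := abs_le.1 hlipx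
    have hL : (0:ℝ) ≤ (L : ℝ) := L.coe_nonneg
    nlinarith [sq_nonneg (‖x k - p k i‖ - 2 * lk * (L : ℝ)), sq_nonneg (lk * (L:ℝ)),
      norm_nonneg (x k - p k i)]
  -- averaging
  have hnR : (0:ℝ) < (n : ℝ) := by exact_mod_cast hn
  have hx1 : x (k + 1) - y = (n : ℝ)⁻¹ • ∑ i, (p k i - y) := by
    rw [hiter k, Finset.sum_sub_distrib, smul_sub, Finset.sum_const, Finset.card_univ,
      Fintype.card_fin, ← Nat.cast_smul_eq_nsmul ℝ, smul_smul,
      inv_mul_cancel₀ hnR.ne', one_smul]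
  have hnorm1 : ‖x (k + 1) - y‖ ≤ (n : ℝ)⁻¹ * ∑ i, ‖p k i - y‖ := by
    rw [hx1, norm_smul, Real.norm_eq_abs, abs_of_pos (inv_pos.2 hnR)]
    exact mul_le_mul_of_nonneg_left (norm_sum_le _ _) (inv_pos.2 hnR).le
  have hsq : (∑ i, ‖p k i - y‖) ^ 2 ≤ (n : ℝ) * ∑ i, ‖p k i - y‖ ^ 2 := by
    have := sq_sum_le_card_mul_sum_sq (s := Finset.univ) (f := fun i => ‖p k i - y‖)
    simpa using this
  have hsum : ∑ i, ‖p k i - y‖ ^ 2 ≤ (n : ℝ) * ‖x k - y‖ ^ 2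
      - 2 * lk * (G (x k) - G y) + (n : ℝ) * (4 * lk ^ 2 * (L : ℝ) ^ 2) := by
    calc ∑ i, ‖p k i - y‖ ^ 2
        ≤ ∑ i, (‖x k - y‖ ^ 2 - 2 * lk * (g i (x k) - g i y) + 4 * lk ^ 2 * (L : ℝ) ^ 2) :=
          Finset.sum_le_sum fun i _ => hper i
      _ = (n : ℝ) * ‖x k - y‖ ^ 2 - 2 * lk * (G (x k) - G y)
            + (n : ℝ) * (4 * lk ^ 2 * (L : ℝ) ^ 2) := by
          rw [Finset.sum_add_distrib, Finset.sum_sub_distrib, Finset.sum_const,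
            Finset.sum_const, Finset.card_univ, Fintype.card_fin, nsmul_eq_mul, nsmul_eq_mul,
            hG, ← Finset.mul_sum, Finset.sum_sub_distrib]
  have h2 : ‖x (k + 1) - y‖ ^ 2 ≤ (n : ℝ)⁻¹ * ∑ i, ‖p k i - y‖ ^ 2 := by
    calc ‖x (k + 1) - y‖ ^ 2 ≤ ((n : ℝ)⁻¹ * ∑ i, ‖p k i - y‖) ^ 2 := by
          apply pow_le_pow_left₀ (norm_nonneg _) hnorm1
      _ = (n : ℝ)⁻¹ ^ 2 * (∑ i, ‖p k i - y‖) ^ 2 := by ring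
      _ ≤ (n : ℝ)⁻¹ ^ 2 * ((n : ℝ) * ∑ i, ‖p k i - y‖ ^ 2) :=
          mul_le_mul_of_nonneg_left hsq (by positivity)
      _ = (n : ℝ)⁻¹ * ∑ i, ‖p k i - y‖ ^ 2 := by
          field_simp
  rw [dist_eq_norm, dist_eq_norm]
  calc ‖x (k + 1) - y‖ ^ 2 ≤ (n : ℝ)⁻¹ * ∑ i, ‖p k i - y‖ ^ 2 := h2
    _ ≤ (n : ℝ)⁻¹ * ((n : ℝ) * ‖x k - y‖ ^ 2 - 2 * lk * (G (x k) - G y)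
          + (n : ℝ) * (4 * lk ^ 2 * (L : ℝ) ^ 2)) :=
        mul_le_mul_of_nonneg_left hsum (by positivity)
    _ = ‖x k - y‖ ^ 2 - 2 * lk / n * (G (x k) - G y) + 4 * lk ^ 2 * (L : ℝ) ^ 2 := by
        field_simp
end
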